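/- Let N ≥ 2 and k ∈ ℕ. For every K > 0 there exists M' = M'(k,K,N) > 0 such that, for every open set Ω ⊆ ℝ^N, if λ₁(Ω) ≤ K then λ_k(Ω) ≤ M'. -/

import Mathlib

/-!
Take a test function `φ` with `R(φ) ≤ Λ := K + 1` and cut space into slabs `{a < x₁ ≤ b}`.
Integrating `φ(x)² ≤ ∫ |∂₁(φ²)|` along lines in the `x₁`-direction shows that the mass
`c ↦ ∫_{x₁ ≤ c} φ²` is Lipschitz with constant `(1 + Λ) ∫ φ²`, so its levels `j ∫ φ² / (2k)`
are reached at points at least `1 / (2k(1 + Λ))` apart. Multiplying `φ` by smooth cutoffs in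
`x₁` equal to `1` on every other slab gives `k` functions with disjoint supports, each of mass
`≥ ∫ φ² / (2k)` and energy `O_{k,Λ}(∫ φ²)`. Every nonzero combination of them then has Rayleigh
quotient bounded in terms of `k` and `K` only, and the min-max principle bounds `λ_k(Ω)`.
-/

open MeasureTheory Set
open scoped ENNReal

noncomputable section

namespace SpectralMin

/-- Points of `ℝ^N`. -/
abbrev EucN (N : ℕ) := EuclideanSpace ℝ (Fin N)

variable {N : ℕ}

/-- The squared Euclidean norm `|Du(z)|²` of the gradient of `u` at `z`. -/
def gradSqE (u : EucN N → ℝ) (z : EucN N) : ℝ :=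
  ∑ p : Fin N, (fderiv ℝ u z (EuclideanSpace.single p 1)) ^ 2

/-- The Rayleigh quotient `R(u, D) = (∫_D |Du|²) / (∫_D u²)`. -/
def rayleighE (D : Set (EucN N)) (u : EucN N → ℝ) : ℝ :=
  (∫ z in D, gradSqE u z) / (∫ z in D, (u z) ^ 2)

/-- Test functions for `Ω`: smooth functions compactly supported inside `Ω`. -/
def IsTestE (Ω : Set (EucN N)) (φ : EucN N → ℝ) : Prop :=
  ContDiff ℝ (⊤ : ℕ∞) φ ∧ HasCompactSupport φ ∧ tsupport φ ⊆ Ω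

/-- The `k`-th Dirichlet eigenvalue `λ_k(Ω)` of an open set `Ω ⊆ ℝ^N`, via the min-max
(Courant–Fischer) principle over `k`-dimensional subspaces of `C_c^∞(Ω) ⊆ W^{1,2}_0(Ω)`. -/
def eigenvalE (Ω : Set (EucN N)) (k : ℕ) : ℝ :=
  sInf { c : ℝ | ∃ u : Fin k → EucN N → ℝ, (∀ i, IsTestE Ω (u i)) ∧ LinearIndependent ℝ u ∧
    ∀ β : Fin k → ℝ, β ≠ 0 → rayleighE univ (fun z => ∑ i, β i * u i z) ≤ c }

section Slab

variable {E : Type*} [NormedAddCommGroup E] [NormedSpace ℝ E] {f : E → ℝ} {ℓ : E →L[ℝ] ℝ} {v : E}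

lemma enorm_le_lintegral_enorm_fderiv_line (hf : ContDiff ℝ 1 f) (hfc : HasCompactSupport f)
    (hv : v ≠ 0) (z : E) : ‖f z‖ₑ ≤ ∫⁻ s : ℝ, ‖fderiv ℝ f (z + s • v) v‖ₑ := by
  set line : ℝ → E := fun s => z + s • v
  have hline : ∀ s, HasDerivAt line v s := fun s => by
    simpa only [one_smul] using ((hasDerivAt_id' s).smul_const v).const_add z
  have hfl : ContDiff ℝ 1 (f ∘ line) := hf.comp (by fun_prop)
  have hflc : HasCompactSupport (f ∘ line) := hfc.comp_isClosedEmbedding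
    ((Homeomorph.addLeft z).isClosedEmbedding.comp (isClosedEmbedding_smul_left hv))
  have hderiv : ∀ s, deriv (f ∘ line) s = fderiv ℝ f (line s) v := fun s =>
    ((hf.differentiable one_ne_zero (line s)).hasFDerivAt.comp_hasDerivAt s (hline s)).deriv
  calc ‖f z‖ₑ = ‖(f ∘ line) 0‖ₑ := by simp [line]
    _ ≤ ∫⁻ s in Iic 0, ‖deriv (f ∘ line) s‖ₑ := hflc.enorm_le_lintegral_Ici_deriv hfl 0
    _ ≤ ∫⁻ s, ‖deriv (f ∘ line) s‖ₑ := setLIntegral_le_lintegral _ _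
    _ = ∫⁻ s : ℝ, ‖fderiv ℝ f (z + s • v) v‖ₑ := by simp_rw [hderiv, line]

lemma lintegral_indicator_preimage_Ioc_sub_smul (hℓv : ℓ v = 1) (a b : ℝ) (x : E) :
    ∫⁻ s : ℝ, (ℓ ⁻¹' Ioc a b).indicator 1 (x - s • v) = ENNReal.ofReal (b - a) := by
  have hpre : (fun s : ℝ => x - s • v) ⁻¹' (ℓ ⁻¹' Ioc a b) = Ico (ℓ x - b) (ℓ x - a) := by
    ext s
    simp only [mem_preimage, map_sub, map_smul, hℓv, smul_eq_mul, mul_one, mem_Ioc, mem_Ico]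
    constructor <;> rintro ⟨h1, h2⟩ <;> constructor <;> linarith
  calc ∫⁻ s : ℝ, (ℓ ⁻¹' Ioc a b).indicator 1 (x - s • v)
      = ∫⁻ s : ℝ, (Ico (ℓ x - b) (ℓ x - a)).indicator 1 s := by rw [← hpre]; rfl
    _ = ENNReal.ofReal (b - a) := by
      rw [lintegral_indicator_one measurableSet_Ico, Real.volume_Ico]
      ring_nf

variable [FiniteDimensional ℝ E] [MeasurableSpace E] [BorelSpace E] {μ : Measure E}
  [μ.IsAddHaarMeasure]

-- Bound `‖f z‖` through the line `z + ℝ v`, then swap integrals and translate: every point `x`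
-- lies on the line of some point of the slab for a set of parameters `s` of measure `b - a`.
lemma lintegral_preimage_Ioc_enorm_le (hf : ContDiff ℝ 1 f) (hfc : HasCompactSupport f)
    (hℓv : ℓ v = 1) (a b : ℝ) :
    ∫⁻ z in ℓ ⁻¹' Ioc a b, ‖f z‖ₑ ∂μ ≤ ENNReal.ofReal (b - a) * ∫⁻ z, ‖fderiv ℝ f z v‖ₑ ∂μ := by
  set S := ℓ ⁻¹' Ioc a b
  set g : E → ℝ≥0∞ := fun z => ‖fderiv ℝ f z v‖ₑ
  have hg : Measurable g :=
    ((hf.continuous_fderiv one_ne_zero).clm_apply continuous_const).enorm.measurable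
  have hS : MeasurableSet S := ℓ.continuous.measurable measurableSet_Ioc
  have hv : v ≠ 0 := by rintro rfl; simp at hℓv
  have hmeas : Measurable fun p : E × ℝ => S.indicator 1 p.1 * g (p.1 + p.2 • v) :=
    ((measurable_const.indicator hS).comp measurable_fst).mul (hg.comp (by fun_prop))
  calc ∫⁻ z in S, ‖f z‖ₑ ∂μ
      ≤ ∫⁻ z in S, (∫⁻ s : ℝ, g (z + s • v)) ∂μ := by
        gcongr with z
        exact enorm_le_lintegral_enorm_fderiv_line hf hfc hv z
    _ = ∫⁻ z, (∫⁻ s : ℝ, S.indicator 1 z * g (z + s • v)) ∂μ := by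
        rw [← lintegral_indicator hS]
        congr with z
        have hgz : Measurable fun s : ℝ => g (z + s • v) := hg.comp (by fun_prop)
        rw [lintegral_const_mul _ hgz]
        by_cases hz : z ∈ S <;> simp [hz]
    _ = ∫⁻ s : ℝ, ∫⁻ z, S.indicator 1 z * g (z + s • v) ∂μ :=
        lintegral_lintegral_swap hmeas.aemeasurable
    _ = ∫⁻ s : ℝ, ∫⁻ x, S.indicator 1 (x - s • v) * g x ∂μ := by
        congr with s
        have hshift := lintegral_sub_right_eq_self (μ := μ)
          (fun z => S.indicator 1 z * g (z + s • v)) (s • v)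
        simp only [sub_add_cancel] at hshift
        exact hshift.symm
    _ = ∫⁻ x, (∫⁻ s : ℝ, S.indicator 1 (x - s • v) * g x) ∂μ :=
        (lintegral_lintegral_swap (((measurable_const.indicator hS).comp (by fun_prop)).mul
          (hg.comp measurable_fst)).aemeasurable).symm
    _ = ∫⁻ x, g x * (∫⁻ s : ℝ, S.indicator 1 (x - s • v)) ∂μ := by
        congr with x
        have hind : Measurable fun s : ℝ => S.indicator (1 : E → ℝ≥0∞) (x - s • v) :=
          (measurable_const.indicator hS).comp (by fun_prop)
        rw [lintegral_mul_const _ hind, mul_comm]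
    _ = ENNReal.ofReal (b - a) * ∫⁻ z, g z ∂μ := by
        simp_rw [S, lintegral_indicator_preimage_Ioc_sub_smul hℓv]
        rw [lintegral_mul_const _ hg, mul_comm]

lemma integral_preimage_Ioc_norm_le (hf : ContDiff ℝ 1 f) (hfc : HasCompactSupport f)
    (hℓv : ℓ v = 1) {a b : ℝ} (hab : a ≤ b) :
    ∫ z in ℓ ⁻¹' Ioc a b, ‖f z‖ ∂μ ≤ (b - a) * ∫ z, ‖fderiv ℝ f z v‖ ∂μ := by
  have hDf : Integrable (fun z => fderiv ℝ f z v) μ :=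
    ((hf.continuous_fderiv one_ne_zero).clm_apply continuous_const).integrable_of_hasCompactSupport
      (hfc.fderiv_apply ℝ v)
  rw [← ENNReal.ofReal_le_ofReal_iff (by positivity), ENNReal.ofReal_mul (sub_nonneg.2 hab),
    ofReal_integral_norm_eq_lintegral_enorm
      (hf.continuous.integrable_of_hasCompactSupport hfc).integrableOn,
    ofReal_integral_norm_eq_lintegral_enorm hDf]
  exact lintegral_preimage_Ioc_enorm_le hf hfc hℓv a b

end Slab

section MassBelow

variable {E : Type*} [NormedAddCommGroup E] [NormedSpace ℝ E] [MeasurableSpace E]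

def massBelow (μ : Measure E) (ℓ : E →L[ℝ] ℝ) (f : E → ℝ) (c : ℝ) : ℝ :=
  ∫ z in ℓ ⁻¹' Iic c, f z ∂μ

variable {μ : Measure E} {ℓ : E →L[ℝ] ℝ} {f : E → ℝ}

lemma massBelow_sub_massBelow [BorelSpace E] (hf : Integrable f μ) {a b : ℝ} (hab : a ≤ b) :
    massBelow μ ℓ f b - massBelow μ ℓ f a = ∫ z in ℓ ⁻¹' Ioc a b, f z ∂μ := by
  rw [massBelow, massBelow, ← Iic_union_Ioc_eq_Iic hab, preimage_union,
    setIntegral_union ((Iic_disjoint_Ioc le_rfl).preimage ℓ)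
      (ℓ.continuous.measurable measurableSet_Ioc) hf.integrableOn hf.integrableOn]
  ring

lemma monotone_massBelow [BorelSpace E] (hf : Integrable f μ) (hf₀ : 0 ≤ f) :
    Monotone (massBelow μ ℓ f) :=
  fun a b hab => sub_nonneg.1 <| by
    rw [massBelow_sub_massBelow hf hab]
    exact setIntegral_nonneg (ℓ.continuous.measurable measurableSet_Ioc) fun z _ => hf₀ z

lemma massBelow_sub_massBelow_le [BorelSpace E] [FiniteDimensional ℝ E] [μ.IsAddHaarMeasure]
    {v : E} (hf : ContDiff ℝ 1 f) (hfc : HasCompactSupport f) (hf₀ : 0 ≤ f) (hℓv : ℓ v = 1)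
    {a b : ℝ} (hab : a ≤ b) :
    massBelow μ ℓ f b - massBelow μ ℓ f a ≤ (b - a) * ∫ z, ‖fderiv ℝ f z v‖ ∂μ := by
  rw [massBelow_sub_massBelow (hf.continuous.integrable_of_hasCompactSupport hfc) hab]
  calc ∫ z in ℓ ⁻¹' Ioc a b, f z ∂μ = ∫ z in ℓ ⁻¹' Ioc a b, ‖f z‖ ∂μ := by
        simp_rw [Real.norm_of_nonneg (hf₀ _)]
    _ ≤ _ := integral_preimage_Ioc_norm_le hf hfc hℓv hab

lemma exists_massBelow_eq_zero_and_eq_integral (hfc : HasCompactSupport f) :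
    ∃ lo hi, lo ≤ hi ∧ massBelow μ ℓ f lo = 0 ∧ massBelow μ ℓ f hi = ∫ z, f z ∂μ := by
  obtain ⟨C, hC⟩ := hfc.isCompact.exists_bound_of_continuousOn ℓ.continuous.continuousOn
  have hzero : ∀ z, |C| < |ℓ z| → f z = 0 := fun z hz =>
    image_eq_zero_of_notMem_tsupport fun hmem =>
      ((hC z hmem).trans (le_abs_self C)).not_gt (by rwa [Real.norm_eq_abs])
  refine ⟨-|C| - 1, |C|, by linarith [abs_nonneg C], ?_, ?_⟩
  · refine setIntegral_eq_zero_of_forall_eq_zero fun z hz => hzero z ?_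
    rw [mem_preimage, mem_Iic] at hz
    rw [abs_of_neg (show ℓ z < 0 by linarith [abs_nonneg C])]
    linarith
  · refine setIntegral_eq_integral_of_forall_compl_eq_zero fun z hz => hzero z ?_
    rw [mem_preimage, mem_Iic, not_le] at hz
    exact hz.trans_le (le_abs_self _)

end MassBelow

section Levels

variable {F : ℝ → ℝ} {L : ℝ}

lemma continuous_of_monotone_of_sub_le_mul (hF : Monotone F) (hL : 0 ≤ L)
    (hlip : ∀ a b, a ≤ b → F b - F a ≤ L * (b - a)) : Continuous F := by
  refine (LipschitzWith.of_le_add_mul' L fun x y => ?_).continuous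
  rcases le_total x y with hxy | hxy
  · linarith [hF hxy, mul_nonneg hL (dist_nonneg (x := x) (y := y))]
  · rw [Real.dist_eq, abs_of_nonneg (sub_nonneg.2 hxy)]
    linarith [hlip y x hxy]

lemma add_div_le_of_le_sub (hF : Monotone F) (hL : 0 < L)
    (hlip : ∀ a b, a ≤ b → F b - F a ≤ L * (b - a)) {s t c : ℝ} (hc : 0 < c)
    (h : c ≤ F t - F s) : s + c / L ≤ t := by
  have hst : s ≤ t := le_of_not_gt fun hts => by linarith [hF hts.le]
  rw [← le_sub_iff_add_le', div_le_iff₀ hL]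
  linarith [hlip s t hst]

lemma exists_separated_intervals (hF : Monotone F) (hL : 0 < L)
    (hlip : ∀ a b, a ≤ b → F b - F a ≤ L * (b - a)) {lo hi : ℝ} (hle : lo ≤ hi) (hlo : F lo = 0)
    (hm : 0 < F hi) (k : ℕ) :
    ∃ a b : Fin k → ℝ, (∀ i, F (b i) - F (a i) = F hi / (2 * k)) ∧ (∀ i, a i ≤ b i) ∧
      ∀ i j, i < j → b i + F hi / (2 * k) / L ≤ a j := by
  set q := F hi / (2 * k)
  have hq : ∀ _ : Fin k, 0 < q := fun i => div_pos hm (by have := i.pos; positivity)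
  have hIVT : ∀ y ∈ Icc 0 (F hi), ∃ t, F t = y := fun y hy =>
    (intermediate_value_Icc hle (continuous_of_monotone_of_sub_le_mul hF hL.le hlip).continuousOn
      (by rwa [hlo])).imp fun _ ht => ht.2
  have hlevel : ∀ (i : Fin k) (r : ℝ), 0 ≤ r → r ≤ 1 → (2 * i + r) * q ∈ Icc 0 (F hi) := by
    intro i r hr₀ hr
    have hik : (i : ℝ) + 1 ≤ k := by exact_mod_cast i.isLt
    have hkq : 2 * k * q = F hi := by
      simp only [q]
      field_simp [Nat.cast_ne_zero.2 i.pos.ne']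
    exact ⟨by have := hq i; positivity, by nlinarith [hq i]⟩
  -- `a i` and `b i` sit at the levels `2i q` and `(2i + 1) q`
  choose a ha using fun i : Fin k => hIVT _ (hlevel i 0 le_rfl zero_le_one)
  choose b hb using fun i : Fin k => hIVT _ (hlevel i 1 zero_le_one le_rfl)
  refine ⟨a, b, fun i => by rw [ha, hb]; ring, fun i => ?_, fun i j hij => ?_⟩
  · refine le_trans (le_add_of_nonneg_right (div_pos (hq i) hL).le)
      (add_div_le_of_le_sub hF hL hlip (hq i) ?_)
    rw [ha, hb]; linarith
  · refine add_div_le_of_le_sub hF hL hlip (hq i) ?_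
    have hij' : (i : ℝ) + 1 ≤ j := by exact_mod_cast hij
    rw [ha, hb]; nlinarith [hq i]

end Levels

section GradSq

variable {u w : EucN N → ℝ} {z : EucN N}

lemma gradSqE_nonneg (u : EucN N → ℝ) (z : EucN N) : 0 ≤ gradSqE u z :=
  Finset.sum_nonneg fun _ _ => sq_nonneg _

lemma sq_fderiv_apply_single_le_gradSqE (u : EucN N → ℝ) (z : EucN N) (p : Fin N) :
    fderiv ℝ u z (EuclideanSpace.single p 1) ^ 2 ≤ gradSqE u z :=
  Finset.single_le_sum (f := fun p => fderiv ℝ u z (EuclideanSpace.single p 1) ^ 2)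
    (fun _ _ => sq_nonneg _) (Finset.mem_univ p)

lemma gradSqE_congr (h : u =ᶠ[nhds z] w) : gradSqE u z = gradSqE w z := by
  simp only [gradSqE, h.fderiv_eq]

lemma gradSqE_of_notMem_tsupport (hz : z ∉ tsupport u) : gradSqE u z = 0 := by
  simp [gradSqE, fderiv_of_notMem_tsupport ℝ hz]

lemma gradSqE_const_mul (c : ℝ) (u : EucN N → ℝ) (z : EucN N) :
    gradSqE (fun x => c * u x) z = c ^ 2 * gradSqE u z := by
  have : fderiv ℝ (fun x => c * u x) z = c • fderiv ℝ u z :=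
    congrFun (fderiv_const_smul_field c) z
  simp only [gradSqE, this, smul_apply, smul_eq_mul, mul_pow, Finset.mul_sum]

lemma gradSqE_mul_le {χ : EucN N → ℝ} (hχ : DifferentiableAt ℝ χ z)
    (hu : DifferentiableAt ℝ u z) :
    gradSqE (fun x => χ x * u x) z ≤ 2 * χ z ^ 2 * gradSqE u z + 2 * u z ^ 2 * gradSqE χ z := by
  simp only [gradSqE, fderiv_fun_mul hχ hu, add_apply, smul_apply, smul_eq_mul, Finset.mul_sum,
    ← Finset.sum_add_distrib]
  gcongr with p
  nlinarith [sq_nonneg (χ z * fderiv ℝ u z (EuclideanSpace.single p 1)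
    - u z * fderiv ℝ χ z (EuclideanSpace.single p 1))]

lemma gradSqE_comp_apply {τ : ℝ → ℝ} {p : Fin N} (hτ : DifferentiableAt ℝ τ (z p)) :
    gradSqE (fun x => τ (x p)) z = deriv τ (z p) ^ 2 := by
  have h : HasFDerivAt (fun x : EucN N => τ (x p))
      (deriv τ (z p) • (EuclideanSpace.proj p : EucN N →L[ℝ] ℝ)) z :=
    hτ.hasDerivAt.comp_hasFDerivAt z
      (by simpa using (EuclideanSpace.proj p : EucN N →L[ℝ] ℝ).hasFDerivAt (x := z))
  simp only [gradSqE, h.fderiv, smul_apply, smul_eq_mul]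
  rw [Finset.sum_eq_single p (fun q _ hq => by simp [Ne.symm hq]) (by simp)]
  simp

lemma continuous_gradSqE (hu : ContDiff ℝ 1 u) : Continuous (gradSqE u) :=
  continuous_finsetSum _ fun _ _ =>
    ((hu.continuous_fderiv one_ne_zero).clm_apply continuous_const).pow 2

lemma integrable_gradSqE (hu : ContDiff ℝ 1 u) (huc : HasCompactSupport u) :
    Integrable (gradSqE u) :=
  (continuous_gradSqE hu).integrable_of_hasCompactSupport <|
    huc.mono' fun _ hz => by_contra fun h => hz (gradSqE_of_notMem_tsupport h)

lemma integrable_sq (hu : Continuous u) (huc : HasCompactSupport u) :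
    Integrable fun z => u z ^ 2 :=
  (hu.pow 2).integrable_of_hasCompactSupport
    (huc.comp_left (g := fun x : ℝ => x ^ 2) (by simp) :)

lemma integral_norm_fderiv_sq_le (hu : ContDiff ℝ 1 u) (huc : HasCompactSupport u) (p : Fin N) :
    ∫ z, ‖fderiv ℝ (fun x => u x ^ 2) z (EuclideanSpace.single p 1)‖
      ≤ (∫ z, u z ^ 2) + ∫ z, gradSqE u z := by
  rw [← integral_add (integrable_sq hu.continuous huc) (integrable_gradSqE hu huc)]
  refine integral_mono_of_nonneg (Filter.Eventually.of_forall fun _ => norm_nonneg _)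
    ((integrable_sq hu.continuous huc).add (integrable_gradSqE hu huc))
    (Filter.Eventually.of_forall fun z => ?_)
  have hD := sq_fderiv_apply_single_le_gradSqE u z p
  dsimp only
  rw [fderiv_fun_pow 2 (hu.differentiable one_ne_zero z)]
  simp only [smul_apply, smul_eq_mul, nsmul_eq_mul, Nat.cast_ofNat, Nat.add_one_sub_one,
    pow_one, Real.norm_eq_abs]
  rw [abs_le]
  constructor <;> nlinarith [sq_nonneg (u z + fderiv ℝ u z (EuclideanSpace.single p 1)),
    sq_nonneg (u z - fderiv ℝ u z (EuclideanSpace.single p 1))]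

end GradSq

section DisjointSupports

open Function

variable {ι : Type*} [Fintype ι]

lemma exists_forall_ne_notMem_tsupport {X : Type*} [TopologicalSpace X] [Nonempty ι]
    {g : ι → X → ℝ} (hg : Pairwise (Disjoint on fun i => tsupport (g i))) (z : X) :
    ∃ i, ∀ j ≠ i, z ∉ tsupport (g j) := by
  by_cases h : ∃ i, z ∈ tsupport (g i)
  · obtain ⟨i, hi⟩ := h
    exact ⟨i, fun j hj hz => Set.disjoint_left.1 (hg hj) hz hi⟩
  · push Not at h
    exact ⟨Classical.arbitrary ι, fun j _ => h j⟩

lemma linearIndependent_of_pairwise_disjoint_support {X K : Type*} [Field K] {g : ι → X → K}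
    (hg : Pairwise (Disjoint on fun i => support (g i))) (hne : ∀ i, g i ≠ 0) :
    LinearIndependent K g := by
  rw [Fintype.linearIndependent_iff]
  intro c hc i
  obtain ⟨z, hz⟩ := Function.ne_iff.1 (hne i)
  have hcz := congr_fun hc z
  simp only [Finset.sum_apply, Pi.smul_apply, smul_eq_mul, Pi.zero_apply] at hcz
  rw [Finset.sum_eq_single i (fun j _ hj => ?_) (by simp)] at hcz
  · exact (mul_eq_zero.1 hcz).resolve_right hz
  · rw [notMem_support.1 fun hzj => Set.disjoint_left.1 (hg hj) hzj hz, mul_zero]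

lemma sq_sum_mul_eq {X : Type*} [TopologicalSpace X] {g : ι → X → ℝ}
    (hg : Pairwise (Disjoint on fun i => tsupport (g i))) (β : ι → ℝ) (z : X) :
    (∑ i, β i * g i z) ^ 2 = ∑ i, β i ^ 2 * g i z ^ 2 := by
  cases isEmpty_or_nonempty ι
  · simp
  obtain ⟨i, hi⟩ := exists_forall_ne_notMem_tsupport hg z
  have h0 : ∀ j ≠ i, g j z = 0 := fun j hj => image_eq_zero_of_notMem_tsupport (hi j hj)
  rw [Finset.sum_eq_single i (fun j _ hj => by simp [h0 j hj]) (by simp),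
    Finset.sum_eq_single i (fun j _ hj => by simp [h0 j hj]) (by simp)]
  ring

variable {g : ι → EucN N → ℝ}

lemma gradSqE_sum_mul_eq (hg : Pairwise (Disjoint on fun i => tsupport (g i))) (β : ι → ℝ)
    (z : EucN N) :
    gradSqE (fun x => ∑ i, β i * g i x) z = ∑ i, β i ^ 2 * gradSqE (g i) z := by
  cases isEmpty_or_nonempty ι
  · simp [gradSqE]
  obtain ⟨i, hi⟩ := exists_forall_ne_notMem_tsupport hg z
  have hev : (fun x => ∑ j, β j * g j x) =ᶠ[nhds z] fun x => β i * g i x := by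
    have : ∀ᶠ x in nhds z, ∀ j, j ≠ i → g j x = 0 := Filter.eventually_all.2 fun j => by
      by_cases hj : j = i
      · simp [hj]
      · exact (notMem_tsupport_iff_eventuallyEq.1 (hi j hj)).mono fun x hx _ => hx
    filter_upwards [this] with x hx
    exact Finset.sum_eq_single i (fun j _ hj => by simp [hx j hj]) (by simp)
  rw [gradSqE_congr hev, gradSqE_const_mul, Finset.sum_eq_single i
    (fun j _ hj => by simp [gradSqE_of_notMem_tsupport (hi j hj)]) (by simp)]

lemma integral_sq_sum_mul_eq (hg : Pairwise (Disjoint on fun i => tsupport (g i)))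
    (hint : ∀ i, Integrable fun z => g i z ^ 2) (β : ι → ℝ) :
    ∫ z, (∑ i, β i * g i z) ^ 2 = ∑ i, β i ^ 2 * ∫ z, g i z ^ 2 := by
  simp_rw [sq_sum_mul_eq hg β]
  rw [integral_finsetSum _ fun i _ => (hint i).const_mul _]
  simp_rw [integral_const_mul]

lemma integral_gradSqE_sum_mul_eq (hg : Pairwise (Disjoint on fun i => tsupport (g i)))
    (hint : ∀ i, Integrable (gradSqE (g i))) (β : ι → ℝ) :
    ∫ z, gradSqE (fun x => ∑ i, β i * g i x) z = ∑ i, β i ^ 2 * ∫ z, gradSqE (g i) z := by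
  simp_rw [gradSqE_sum_mul_eq hg β]
  rw [integral_finsetSum _ fun i _ => (hint i).const_mul _]
  simp_rw [integral_const_mul]

lemma rayleighE_sum_mul_le (hg : Pairwise (Disjoint on fun i => tsupport (g i)))
    (hsq : ∀ i, Integrable fun z => g i z ^ 2) (hgrad : ∀ i, Integrable (gradSqE (g i)))
    (hpos : ∀ i, 0 < ∫ z, g i z ^ 2) {C : ℝ}
    (hC : ∀ i, ∫ z, gradSqE (g i) z ≤ C * ∫ z, g i z ^ 2) {β : ι → ℝ} (hβ : β ≠ 0) :
    rayleighE univ (fun z => ∑ i, β i * g i z) ≤ C := by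
  obtain ⟨i₀, hi₀⟩ := Function.ne_iff.1 hβ
  have hden : 0 < ∑ i, β i ^ 2 * ∫ z, g i z ^ 2 :=
    Finset.sum_pos' (fun i _ => mul_nonneg (sq_nonneg _) (hpos i).le)
      ⟨i₀, Finset.mem_univ _, mul_pos (by have h : β i₀ ≠ 0 := hi₀; positivity) (hpos i₀)⟩
  rw [rayleighE, Measure.restrict_univ, integral_gradSqE_sum_mul_eq hg hgrad,
    integral_sq_sum_mul_eq hg hsq, div_le_iff₀ hden, Finset.mul_sum]
  exact Finset.sum_le_sum fun i _ => by
    nlinarith [mul_le_mul_of_nonneg_left (hC i) (sq_nonneg (β i))]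

end DisjointSupports

section Plateau

open Real

lemma exists_abs_deriv_smoothTransition_le : ∃ B, ∀ t, |deriv smoothTransition t| ≤ B := by
  have hzero : ∀ t ∉ Icc (0 : ℝ) 1, deriv smoothTransition t = 0 := by
    intro t ht
    rcases not_and_or.1 ht with h | h <;> push Not at h
    · have : smoothTransition =ᶠ[nhds t] fun _ => 0 := by
        filter_upwards [Iio_mem_nhds h] with s hs using smoothTransition.zero_of_nonpos hs.le
      simp [this.deriv_eq]
    · have : smoothTransition =ᶠ[nhds t] fun _ => 1 := by
        filter_upwards [Ioi_mem_nhds h] with s hs using smoothTransition.one_of_one_le hs.le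
      simp [this.deriv_eq]
  exact ((smoothTransition.contDiff (n := 1)).continuous_deriv le_rfl)
    |>.bounded_above_of_compact_support (HasCompactSupport.intro isCompact_Icc hzero)

lemma exists_smooth_plateau : ∃ B, ∀ a b δ : ℝ, 0 < δ → ∃ τ : ℝ → ℝ, ContDiff ℝ (⊤ : ℕ∞) τ ∧
    (∀ t, |τ t| ≤ 1) ∧ EqOn τ 1 (Icc a b) ∧ tsupport τ ⊆ Icc (a - δ) (b + δ) ∧
    ∀ t, |deriv τ t| ≤ B / δ := by
  obtain ⟨B, hB⟩ := exists_abs_deriv_smoothTransition_le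
  have hB₀ : 0 ≤ B := (abs_nonneg _).trans (hB 0)
  have habs : ∀ s, |smoothTransition s| ≤ 1 := fun s =>
    abs_le.2 ⟨by linarith [smoothTransition.nonneg s], smoothTransition.le_one s⟩
  have hψ : ContDiff ℝ (⊤ : ℕ∞) smoothTransition := smoothTransition.contDiff
  have hd : ∀ s, HasDerivAt smoothTransition (deriv smoothTransition s) s := fun s =>
    (hψ.differentiable (by simp) s).hasDerivAt
  refine ⟨2 * B, fun a b δ hδ => ?_⟩
  let l : ℝ → ℝ := fun t => (t - a) / δ + 1
  let r : ℝ → ℝ := fun t => (b - t) / δ + 1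
  have hτ : ∀ t, HasDerivAt (fun t => smoothTransition (l t) * smoothTransition (r t))
      (deriv smoothTransition (l t) * (1 / δ) * smoothTransition (r t)
        + smoothTransition (l t) * (deriv smoothTransition (r t) * (-1 / δ))) t := fun t =>
    ((hd _).comp t ((((hasDerivAt_id' t).sub_const a).div_const δ).add_const 1)).mul
      ((hd _).comp t ((((hasDerivAt_id' t).const_sub b).div_const δ).add_const 1))
  refine ⟨fun t => smoothTransition (l t) * smoothTransition (r t),
    (hψ.comp (by fun_prop)).mul (hψ.comp (by fun_prop)), fun t => ?_, fun t ht => ?_,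
    closure_minimal (fun t ht => ?_) isClosed_Icc, fun t => ?_⟩
  · rw [abs_mul]
    exact mul_le_one₀ (habs _) (abs_nonneg _) (habs _)
  · have hlt : 1 ≤ l t := by linarith [div_nonneg (sub_nonneg.2 ht.1) hδ.le]
    have hrt : 1 ≤ r t := by linarith [div_nonneg (sub_nonneg.2 ht.2) hδ.le]
    simp [smoothTransition.one_of_one_le hlt, smoothTransition.one_of_one_le hrt]
  · by_contra hout
    apply ht
    rcases not_and_or.1 hout with h | h <;> push Not at h
    · have hlt : l t ≤ 0 := by
        rw [← le_sub_iff_add_le, zero_sub, div_le_iff₀ hδ]; linarith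
      simp [smoothTransition.zero_of_nonpos hlt]
    · have hrt : r t ≤ 0 := by
        rw [← le_sub_iff_add_le, zero_sub, div_le_iff₀ hδ]; linarith
      simp [smoothTransition.zero_of_nonpos hrt]
  · rw [(hτ t).deriv]
    calc _ ≤ B * |1 / δ| * 1 + 1 * (B * |-1 / δ|) := by
          refine (abs_add_le _ _).trans ?_
          simp only [abs_mul]
          gcongr
          exacts [hB _, habs _, habs _, hB _]
      _ = 2 * B / δ := by
          rw [neg_div, abs_neg, abs_of_pos (one_div_pos.2 hδ)]
          ring

end Plateau

section Localization

open Function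

lemma integral_sq_pos {φ : EucN N → ℝ} (hφ : Continuous φ) (hφc : HasCompactSupport φ)
    (hφ₀ : φ ≠ 0) : 0 < ∫ z, φ z ^ 2 := by
  rw [integral_pos_iff_support_of_nonneg (fun z => sq_nonneg _) (integrable_sq hφ hφc)]
  have hsupp : support (fun z => φ z ^ 2) = support φ := by ext z; simp
  rw [hsupp]
  exact hφ.isOpen_support.measure_pos volume (Function.support_nonempty_iff.2 hφ₀)

lemma exists_separated_slabs {φ : EucN N → ℝ} (hφ : ContDiff ℝ 1 φ) (hφc : HasCompactSupport φ)
    (hm : 0 < ∫ z, φ z ^ 2) {Λ : ℝ} (hΛ : 0 ≤ Λ)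
    (hE : ∫ z, gradSqE φ z ≤ Λ * ∫ z, φ z ^ 2) (p : Fin N) (k : ℕ) :
    ∃ a b : Fin k → ℝ,
      (∀ i, (∫ z, φ z ^ 2) / (2 * k) = ∫ z in {z | z p ∈ Ioc (a i) (b i)}, φ z ^ 2) ∧
      ∀ i j, i < j → b i + 1 / (2 * k * (1 + Λ)) ≤ a j := by
  set F := massBelow volume (EuclideanSpace.proj p) fun z : EucN N => φ z ^ 2
  have hsq : ContDiff ℝ 1 fun z => φ z ^ 2 := hφ.pow 2
  have hsqc : HasCompactSupport fun z => φ z ^ 2 :=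
    (hφc.comp_left (g := fun x : ℝ => x ^ 2) (by simp) :)
  have hint := integrable_sq hφ.continuous hφc
  have hlip : ∀ a b, a ≤ b → F b - F a ≤ ((1 + Λ) * ∫ z, φ z ^ 2) * (b - a) := fun a b hab => by
    refine (massBelow_sub_massBelow_le hsq hsqc (fun z => sq_nonneg _)
      (by simp : EuclideanSpace.proj p (EuclideanSpace.single p (1 : ℝ)) = 1) hab).trans ?_
    rw [mul_comm]
    gcongr
    linarith [integral_norm_fderiv_sq_le hφ hφc p]
  obtain ⟨lo, hi, hle, hlo, hhi⟩ :=
    exists_massBelow_eq_zero_and_eq_integral (μ := volume) (ℓ := EuclideanSpace.proj p) hsqc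
  obtain ⟨a, b, hmass, hab, hgap⟩ := exists_separated_intervals
    (monotone_massBelow hint fun z => sq_nonneg _) (by positivity) hlip hle hlo (hhi ▸ hm) k
  refine ⟨a, b, fun i => ?_, fun i j hij => ?_⟩
  · have hslab := massBelow_sub_massBelow (ℓ := EuclideanSpace.proj p) hint (hab i)
    rw [hmass i, hhi] at hslab
    exact hslab
  · have hgap := hgap i j hij
    rw [hhi] at hgap
    convert hgap using 2
    field_simp

lemma exists_slab_cutoffs (p : Fin N) : ∃ C, 0 ≤ C ∧ ∀ (k : ℕ) (d : ℝ), 0 < d →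
    ∀ a b : Fin k → ℝ, (∀ i j, i < j → b i + d ≤ a j) → ∃ χ : Fin k → EucN N → ℝ,
      (∀ i, ContDiff ℝ (⊤ : ℕ∞) (χ i)) ∧ (∀ i z, |χ i z| ≤ 1) ∧
      (∀ i z, z p ∈ Icc (a i) (b i) → χ i z = 1) ∧
      Pairwise (Disjoint on fun i => tsupport (χ i)) ∧ ∀ i z, gradSqE (χ i) z ≤ C / d ^ 2 := by
  obtain ⟨B, hB⟩ := exists_smooth_plateau
  refine ⟨9 * B ^ 2, by positivity, fun k d hd a b hgap => ?_⟩
  choose τ hτ hτ₁ hτslab hτsupp hτ' using fun i => hB (a i) (b i) (d / 3) (by positivity)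
  have hsupp : ∀ i, tsupport (fun z : EucN N => τ i (z p))
      ⊆ (fun z : EucN N => z p) ⁻¹' Icc (a i - d / 3) (b i + d / 3) := fun i =>
    (tsupport_comp_subset_preimage (τ i) (EuclideanSpace.proj p).continuous).trans
      (preimage_mono (hτsupp i))
  refine ⟨fun i z => τ i (z p),
    fun i => (hτ i).comp (EuclideanSpace.proj p : EucN N →L[ℝ] ℝ).contDiff, fun i z => hτ₁ i _,
    fun i z hz => hτslab i hz, (pairwise_disjoint_on _).2 fun i j hij => ?_,
    fun i z => ?_⟩
  · refine ((Disjoint.preimage _ ?_).mono_left (hsupp i)).mono_right (hsupp j)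
    rw [Set.disjoint_left]
    intro t ht ht'
    linarith [hgap i j hij, ht.2, ht'.1]
  · rw [gradSqE_comp_apply ((hτ i).differentiable (by simp) _)]
    calc deriv (τ i) (z p) ^ 2 ≤ (B / (d / 3)) ^ 2 :=
          sq_le_sq.2 ((hτ' i _).trans (le_abs_self _))
      _ = 9 * B ^ 2 / d ^ 2 := by field_simp; ring

lemma setIntegral_sq_le_integral_sq_mul {X : Type*} [MeasurableSpace X] {μ : Measure X}
    {χ φ : X → ℝ} {S : Set X} (hS : MeasurableSet S) (hχ : EqOn χ 1 S)
    (hint : Integrable (fun z => (χ z * φ z) ^ 2) μ) :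
    ∫ z in S, φ z ^ 2 ∂μ ≤ ∫ z, (χ z * φ z) ^ 2 ∂μ :=
  calc ∫ z in S, φ z ^ 2 ∂μ = ∫ z in S, (χ z * φ z) ^ 2 ∂μ :=
        setIntegral_congr_fun hS fun z hz => by simp [hχ hz]
    _ ≤ ∫ z, (χ z * φ z) ^ 2 ∂μ :=
        setIntegral_le_integral hint (Filter.Eventually.of_forall fun _ => sq_nonneg _)

lemma integral_gradSqE_mul_le {χ φ : EucN N → ℝ} (hχ : ContDiff ℝ 1 χ) (hφ : ContDiff ℝ 1 φ)
    (hφc : HasCompactSupport φ) (hχ₁ : ∀ z, |χ z| ≤ 1) {A : ℝ} (hA : ∀ z, gradSqE χ z ≤ A) :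
    ∫ z, gradSqE (fun x => χ x * φ x) z ≤ 2 * (∫ z, gradSqE φ z) + 2 * A * ∫ z, φ z ^ 2 := by
  have hE := integrable_gradSqE hφ hφc
  have hm := integrable_sq hφ.continuous hφc
  rw [← integral_const_mul, ← integral_const_mul,
    ← integral_add (hE.const_mul _) (hm.const_mul _)]
  refine integral_mono_of_nonneg (Filter.Eventually.of_forall fun z => gradSqE_nonneg _ _)
    ((hE.const_mul _).add (hm.const_mul _)) (Filter.Eventually.of_forall fun z => ?_)
  have hχz : χ z ^ 2 ≤ 1 := sq_le_one_iff_abs_le_one _ |>.2 (hχ₁ z)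
  have := gradSqE_mul_le (hχ.differentiable one_ne_zero z) (hφ.differentiable one_ne_zero z)
  nlinarith [gradSqE_nonneg φ z, sq_nonneg (φ z), hA z]

lemma exists_family_rayleighE_le (p : Fin N) {k : ℕ} (hk : 0 < k) {Λ : ℝ} (hΛ : 0 < Λ) :
    ∃ M, 0 < M ∧ ∀ (Ω : Set (EucN N)) (φ : EucN N → ℝ), IsTestE Ω φ → φ ≠ 0 →
      rayleighE univ φ ≤ Λ → ∃ g : Fin k → EucN N → ℝ, (∀ i, IsTestE Ω (g i)) ∧
        LinearIndependent ℝ g ∧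
        ∀ β : Fin k → ℝ, β ≠ 0 → rayleighE univ (fun z => ∑ i, β i * g i z) ≤ M := by
  obtain ⟨C, hC, hcutoff⟩ := exists_slab_cutoffs (N := N) p
  set d : ℝ := 1 / (2 * k * (1 + Λ))
  have hd : 0 < d := by positivity
  set M := 2 * k * (2 * Λ + 2 * (C / d ^ 2))
  refine ⟨M, by positivity, fun Ω φ ⟨hφ, hφc, hφΩ⟩ hφ₀ hR => ?_⟩
  have hφ₁ : ContDiff ℝ 1 φ := hφ.of_le (by simp)
  have hm := integral_sq_pos hφ.continuous hφc hφ₀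
  have hE : ∫ z, gradSqE φ z ≤ Λ * ∫ z, φ z ^ 2 := by
    rwa [rayleighE, Measure.restrict_univ, div_le_iff₀ hm] at hR
  obtain ⟨a, b, hmass, hgap⟩ := exists_separated_slabs hφ₁ hφc hm hΛ.le hE p k
  obtain ⟨χ, hχ, hχ₁, hχslab, hχdisj, hχgrad⟩ := hcutoff k d hd a b hgap
  set g : Fin k → EucN N → ℝ := fun i z => χ i z * φ z
  have hg : ∀ i, ContDiff ℝ (⊤ : ℕ∞) (g i) := fun i => (hχ i).mul hφ
  have hgc : ∀ i, HasCompactSupport (g i) := fun i => hφc.mul_left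
  have hdisj : Pairwise (Disjoint on fun i => tsupport (g i)) := fun i j hij =>
    (hχdisj hij).mono tsupport_mul_subset_left tsupport_mul_subset_left
  have hsq : ∀ i, Integrable fun z => g i z ^ 2 := fun i =>
    integrable_sq (hg i).continuous (hgc i)
  have hlow : ∀ i, (∫ z, φ z ^ 2) / (2 * k) ≤ ∫ z, g i z ^ 2 := fun i =>
    (hmass i).trans_le <| setIntegral_sq_le_integral_sq_mul
      ((EuclideanSpace.proj p).continuous.measurable measurableSet_Ioc)
      (fun z hz => hχslab i z (Ioc_subset_Icc_self hz)) (hsq i)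
  have hpos : ∀ i, 0 < ∫ z, g i z ^ 2 := fun i =>
    (by positivity : (0 : ℝ) < _).trans_le (hlow i)
  have henergy : ∀ i, ∫ z, gradSqE (g i) z ≤ M * ∫ z, g i z ^ 2 := fun i =>
    calc ∫ z, gradSqE (g i) z
        ≤ 2 * (∫ z, gradSqE φ z) + 2 * (C / d ^ 2) * ∫ z, φ z ^ 2 :=
          integral_gradSqE_mul_le ((hχ i).of_le (by simp)) hφ₁ hφc (hχ₁ i) (hχgrad i)
      _ ≤ (2 * Λ + 2 * (C / d ^ 2)) * ∫ z, φ z ^ 2 := by nlinarith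
      _ = M * ((∫ z, φ z ^ 2) / (2 * k)) := by
          simp only [M]
          field_simp
      _ ≤ M * ∫ z, g i z ^ 2 := by gcongr; exact hlow i
  refine ⟨g, fun i => ⟨hg i, hgc i, tsupport_mul_subset_right.trans hφΩ⟩, ?_, fun β hβ =>
    rayleighE_sum_mul_le hdisj hsq (fun i => integrable_gradSqE ((hg i).of_le (by simp)) (hgc i))
      hpos henergy hβ⟩
  refine linearIndependent_of_pairwise_disjoint_support
    (fun i j hij => (hdisj hij).mono (subset_tsupport _) (subset_tsupport _)) fun i hgi => ?_
  simpa [hgi] using hpos i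

end Localization

section Eigenvalue

variable {Ω : Set (EucN N)} {k : ℕ}

lemma rayleighE_nonneg (D : Set (EucN N)) (u : EucN N → ℝ) : 0 ≤ rayleighE D u :=
  div_nonneg (integral_nonneg fun z => gradSqE_nonneg u z) (integral_nonneg fun _ => sq_nonneg _)

lemma rayleighE_const_mul (D : Set (EucN N)) (u : EucN N → ℝ) {c : ℝ} (hc : c ≠ 0) :
    rayleighE D (fun z => c * u z) = rayleighE D u := by
  simp only [rayleighE, gradSqE_const_mul, mul_pow, integral_const_mul]
  exact mul_div_mul_left _ _ (pow_ne_zero 2 hc)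

lemma nonneg_of_forall_rayleighE_le (hk : 1 ≤ k) {u : Fin k → EucN N → ℝ} {c : ℝ}
    (hc : ∀ β : Fin k → ℝ, β ≠ 0 → rayleighE univ (fun z => ∑ i, β i * u i z) ≤ c) : 0 ≤ c :=
  (rayleighE_nonneg _ _).trans (hc 1 fun h => one_ne_zero (congr_fun h ⟨0, hk⟩))

lemma eigenvalE_le (hk : 1 ≤ k) {u : Fin k → EucN N → ℝ} (hu : ∀ i, IsTestE Ω (u i))
    (hli : LinearIndependent ℝ u) {c : ℝ}
    (hc : ∀ β : Fin k → ℝ, β ≠ 0 → rayleighE univ (fun z => ∑ i, β i * u i z) ≤ c) :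
    eigenvalE Ω k ≤ c :=
  csInf_le ⟨0, fun _ ⟨_, _, _, h⟩ => nonneg_of_forall_rayleighE_le hk h⟩ ⟨u, hu, hli, hc⟩

-- With no nonzero test function the defining set is empty, and `sInf ∅ = 0`.
lemma eigenvalE_eq_zero (hk : 1 ≤ k) (h : ∀ φ, IsTestE Ω φ → φ = 0) : eigenvalE Ω k = 0 := by
  rw [eigenvalE, ← Real.sInf_empty]
  congr 1
  refine eq_empty_of_forall_notMem fun c ⟨u, hu, hli, _⟩ => ?_
  exact hli.ne_zero ⟨0, hk⟩ (h _ (hu _))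

lemma exists_rayleighE_lt_of_eigenvalE_one_lt {φ : EucN N → ℝ} (hφ : IsTestE Ω φ) (hφ₀ : φ ≠ 0)
    {c : ℝ} (h : eigenvalE Ω 1 < c) : ∃ ψ, IsTestE Ω ψ ∧ ψ ≠ 0 ∧ rayleighE univ ψ < c := by
  rw [eigenvalE] at h
  refine (exists_lt_of_csInf_lt ?_ h).elim fun _ ⟨⟨u, hu, hli, hR⟩, hc'⟩ =>
    ⟨u 0, hu 0, hli.ne_zero 0, lt_of_le_of_lt (by simpa using hR 1 one_ne_zero) hc'⟩
  refine ⟨rayleighE univ φ, fun _ => φ, fun _ => hφ, linearIndependent_unique_iff.2 hφ₀,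
    fun β hβ => ?_⟩
  have hβ₀ : β 0 ≠ 0 := fun h0 => hβ (funext fun i => by rw [Subsingleton.elim i 0, h0]; rfl)
  simp only [Fin.sum_univ_one, rayleighE_const_mul _ _ hβ₀, le_refl]

end Eigenvalue

/-- Lemma `exthm`. For every `K > 0` there exists
`M' = M'(k,K,N) > 0` such that, for every open set `Ω ⊆ ℝ^N`, if `λ₁(Ω) ≤ K` then
`λ_k(Ω) ≤ M'`. -/
theorem lambda_k_bounded_by_lambda_one_bound
    (N k : ℕ) (hN : 2 ≤ N) (hk : 1 ≤ k) (K : ℝ) (hK : 0 < K) :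
    ∃ M' : ℝ, 0 < M' ∧
      ∀ Ω : Set (EucN N), IsOpen Ω → eigenvalE Ω 1 ≤ K → eigenvalE Ω k ≤ M' := by
  obtain ⟨M, hM, hfamily⟩ :=
    exists_family_rayleighE_le (⟨0, by omega⟩ : Fin N) hk (Λ := K + 1) (by linarith)
  refine ⟨M, hM, fun Ω _ hK₁ => ?_⟩
  by_cases htest : ∃ φ, IsTestE Ω φ ∧ φ ≠ 0
  · obtain ⟨φ, hφ, hφ₀⟩ := htest
    obtain ⟨ψ, hψ, hψ₀, hψR⟩ :=
      exists_rayleighE_lt_of_eigenvalE_one_lt hφ hφ₀ (hK₁.trans_lt (lt_add_one K))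
    obtain ⟨g, hg, hli, hgR⟩ := hfamily Ω ψ hψ hψ₀ hψR.le
    exact eigenvalE_le hk hg hli hgR
  · push Not at htest
    rw [eigenvalE_eq_zero hk htest]
    exact hM.le

end SpectralMin
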